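/- Let n ≥ 1 be an integer. If the Wang tile t with right label α, top label β, left label u and bottom label v belongs to T_n, then the unique valid rectangular pattern over T'_n whose right, top, left and bottom label words are respectively τ_n(α), τ_n(β), τ_n(u) and τ_n(v) uses only tiles from T_n. -/
import Mathlib


structure WangTile (C : Type*) where
  right : C
  top : C
  left : C
  bottom : C
deriving DecidableEq

abbrev Lbl : Type := ℤ × ℤ × ℤ

def Vn (n : ℤ) : Set Lbl :=
  {v | 0 ≤ v.1 ∧ v.1 ≤ v.2.1 ∧ v.2.1 ≤ 1 ∧ v.2.1 ≤ v.2.2 ∧ v.2.2 ≤ n + 1}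

def hatT {C : Type*} (t : WangTile C) : WangTile C :=
  ⟨t.top, t.right, t.bottom, t.left⟩

def whiteTiles (n : ℤ) : Set (WangTile Lbl) :=
  {t | ∃ i j : ℤ, 1 ≤ i ∧ i ≤ n ∧ 1 ≤ j ∧ j ≤ n ∧
    t = ⟨(1, 1, i + 1), (1, 1, j + 1), (1, 1, i), (1, 1, j)⟩}

def blueH (n : ℤ) : Set (WangTile Lbl) :=
  {t | ∃ i : ℤ, 0 ≤ i ∧ i ≤ n ∧ t = ⟨(0, 0, i + 1), (1, 1, 1), (0, 0, i), (1, 1, n)⟩}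

def greenH (n : ℤ) : Set (WangTile Lbl) :=
  {t | ∃ i : ℤ, 0 ≤ i ∧ i ≤ n ∧ t = ⟨(0, 1, i + 1), (1, 1, 1), (0, 0, i), (1, 1, n + 1)⟩}

def yellowH (n : ℤ) : Set (WangTile Lbl) :=
  {t | ∃ i : ℤ, 1 ≤ i ∧ i ≤ n ∧ t = ⟨(0, 1, i + 1), (1, 1, 2), (0, 1, i), (1, 1, n + 1)⟩}

def antiH (n : ℤ) : Set (WangTile Lbl) :=
  {t | ∃ i : ℤ, 1 ≤ i ∧ i ≤ n ∧ t = ⟨(0, 0, i + 1), (1, 1, 2), (0, 1, i), (1, 1, n)⟩}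

def junctionTile (n k l r s : ℤ) : WangTile Lbl :=
  ⟨(0, k, l), (0, r, s), (0, s, r + n), (0, l, k + n)⟩

def jPairs : Set (ℤ × ℤ) := {(0, 0), (0, 1), (1, 1)}

def junctions (n : ℤ) : Set (WangTile Lbl) :=
  {t | ∃ k l r s : ℤ, (k, l) ∈ jPairs ∧ (r, s) ∈ jPairs ∧ t = junctionTile n k l r s}

def Text (n : ℤ) : Set (WangTile Lbl) :=
  whiteTiles n ∪ blueH n ∪ greenH n ∪ yellowH n ∪ antiH n ∪
    hatT '' blueH n ∪ hatT '' greenH n ∪ hatT '' yellowH n ∪ hatT '' antiH n ∪ junctions n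

def Dset (n : ℤ) : Set (WangTile Lbl) :=
  {(⟨(0, 0, n + 1), (1, 1, 1), (0, 0, n), (1, 1, n)⟩ : WangTile Lbl),
    hatT (⟨(0, 0, n + 1), (1, 1, 1), (0, 0, n), (1, 1, n)⟩ : WangTile Lbl),
    junctionTile n 0 0 1 1, junctionTile n 1 1 0 0}

def Tmet (n : ℤ) : Set (WangTile Lbl) :=
  Text n \ (antiH n ∪ hatT '' antiH n ∪ Dset n)

def ValidConfig {C : Type*} (T : Set (WangTile C)) (x : ℤ × ℤ → WangTile C) : Prop :=
  (∀ m, x m ∈ T) ∧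
    (∀ m : ℤ × ℤ, (x m).right = (x (m.1 + 1, m.2)).left) ∧
    (∀ m : ℤ × ℤ, (x m).top = (x (m.1, m.2 + 1)).bottom)

def ValidPattern {C : Type*} (T : Set (WangTile C)) (w h : ℕ) (p : ℕ → ℕ → WangTile C) : Prop :=
  (∀ i j, i < w → j < h → p i j ∈ T) ∧
    (∀ i j, i + 1 < w → j < h → (p i j).right = (p (i + 1) j).left) ∧
    (∀ i j, i < w → j + 1 < h → (p i j).top = (p i (j + 1)).bottom)

def bottomWord {C : Type*} (w : ℕ) (p : ℕ → ℕ → WangTile C) : List C :=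
  (List.range w).map fun i => (p i 0).bottom

def topWord {C : Type*} (w h : ℕ) (p : ℕ → ℕ → WangTile C) : List C :=
  (List.range w).map fun i => (p i (h - 1)).top

def leftWord {C : Type*} (h : ℕ) (p : ℕ → ℕ → WangTile C) : List C :=
  (List.range h).map fun j => (p 0 j).left

def rightWord {C : Type*} (w h : ℕ) (p : ℕ → ℕ → WangTile C) : List C :=
  (List.range h).map fun j => (p (w - 1) j).right

def tau (n : ℤ) (v : Lbl) : List Lbl :=
  if v.1 = v.2.2 then
    (0, v.1 - v.2.1 + 1, n + 1) :: List.replicate (n - v.2.2).toNat (1, 1, n + 1)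
  else
    (0, v.1 - v.2.1 + 1, n) ::
      (List.replicate (v.2.2 - v.1 - 1).toNat (1, 1, n) ++
        List.replicate (n + 1 - v.2.2).toNat (1, 1, n + 1))

section
variable {n : ℤ} {v : Lbl}

lemma tau_length (hv : v ∈ Vn n) (hn : 1 ≤ n) : (tau n v).length = (n + 1 - v.1).toNat := by
  obtain ⟨h1, h2, h3, h4, h5⟩ := hv
  unfold tau
  split <;> simp <;> omega

lemma tau_ne_nil (n : ℤ) (v : Lbl) : tau n v ≠ [] := by
  unfold tau; split <;> simp

lemma tau_getElem_zero (n : ℤ) (v : Lbl) (h0 : 0 < (tau n v).length) :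
    (tau n v)[0] = ((0 : ℤ), v.1 - v.2.1 + 1, if v.1 = v.2.2 then n + 1 else n) := by
  unfold tau
  split <;> simp_all

lemma tau_getElem_pos (hv : v ∈ Vn n) (hn : 1 ≤ n) (i : ℕ) (h1 : 1 ≤ i)
    (h2 : i < (tau n v).length) :
    (tau n v)[i] = if (i : ℤ) ≤ v.2.2 - v.1 - 1 then ((1:ℤ), (1:ℤ), n) else (1, 1, n + 1) := by
  obtain ⟨hA, hB, hC, hD, hE⟩ := hv
  obtain ⟨k, rfl⟩ : ∃ k, i = k + 1 := ⟨i - 1, by omega⟩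
  by_cases hxz : v.1 = v.2.2
  · rw [if_neg (by omega)]
    simp only [tau, if_pos hxz] at h2 ⊢
    simp only [List.getElem_cons_succ]
    exact List.getElem_replicate ..
  · simp only [tau, if_neg hxz] at h2 ⊢
    simp only [List.getElem_cons_succ]
    by_cases hk : k < (v.2.2 - v.1 - 1).toNat
    · rw [if_pos (by omega)]
      rw [List.getElem_append_left (by simpa using hk)]
      exact List.getElem_replicate ..
    · rw [if_neg (by omega)]
      rw [List.getElem_append_right (by simpa using hk)]
      exact List.getElem_replicate ..

end
section
variable {n : ℤ} {t : WangTile Lbl}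

lemma classify_white (h : t ∈ Text n) (h1 : t.left.1 = 1) (h2 : t.bottom.1 = 1) :
    t ∈ whiteTiles n := by
  rcases h with (((((((((h | h) | h) | h) | h) | h) | h) | h) | h) | h)
  · exact h
  all_goals first
    | (obtain ⟨i, _, _, rfl⟩ := h; simp at h1 h2 <;> omega)
    | (obtain ⟨s, hs, rfl⟩ := h; obtain ⟨i, _, _, rfl⟩ := hs; simp [hatT] at h1 h2 <;> omega)
    | (obtain ⟨k, l, r, s, _, _, rfl⟩ := h; simp [junctionTile] at h1 h2 <;> omega)

lemma classify_junction (h : t ∈ Text n) (h1 : t.left.1 = 0) (h2 : t.bottom.1 = 0) :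
    t ∈ junctions n := by
  rcases h with (((((((((h | h) | h) | h) | h) | h) | h) | h) | h) | h)
  · obtain ⟨i, j, _, _, _, _, rfl⟩ := h; simp at h1
  · obtain ⟨i, _, _, rfl⟩ := h; simp at h2
  · obtain ⟨i, _, _, rfl⟩ := h; simp at h2
  · obtain ⟨i, _, _, rfl⟩ := h; simp at h2
  · obtain ⟨i, _, _, rfl⟩ := h; simp at h2
  all_goals first
    | exact h
    | (obtain ⟨s, hs, rfl⟩ := h; obtain ⟨i, _, _, rfl⟩ := hs; simp [hatT] at h1)

lemma classify_horiz (h : t ∈ Text n) (h1 : t.left.1 = 0) (h2 : t.bottom.1 = 1) :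
    t ∈ blueH n ∨ t ∈ greenH n ∨ t ∈ yellowH n ∨ t ∈ antiH n := by
  rcases h with (((((((((h | h) | h) | h) | h) | h) | h) | h) | h) | h)
  · obtain ⟨i, j, _, _, _, _, rfl⟩ := h; simp at h1
  · exact Or.inl h
  · exact Or.inr (Or.inl h)
  · exact Or.inr (Or.inr (Or.inl h))
  · exact Or.inr (Or.inr (Or.inr h))
  all_goals first
    | (obtain ⟨s, hs, rfl⟩ := h; obtain ⟨i, _, _, rfl⟩ := hs; simp [hatT] at h1)
    | (obtain ⟨k, l, r, s, _, _, rfl⟩ := h; simp [junctionTile] at h2)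

lemma classify_vert (h : t ∈ Text n) (h1 : t.left.1 = 1) (h2 : t.bottom.1 = 0) :
    t ∈ hatT '' blueH n ∨ t ∈ hatT '' greenH n ∨ t ∈ hatT '' yellowH n ∨ t ∈ hatT '' antiH n := by
  rcases h with (((((((((h | h) | h) | h) | h) | h) | h) | h) | h) | h)
  · obtain ⟨i, j, _, _, _, _, rfl⟩ := h; simp at h2
  · obtain ⟨i, _, _, rfl⟩ := h; simp at h1
  · obtain ⟨i, _, _, rfl⟩ := h; simp at h1
  · obtain ⟨i, _, _, rfl⟩ := h; simp at h1
  · obtain ⟨i, _, _, rfl⟩ := h; simp at h1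
  · exact Or.inl h
  · exact Or.inr (Or.inl h)
  · exact Or.inr (Or.inr (Or.inl h))
  · exact Or.inr (Or.inr (Or.inr h))
  · obtain ⟨k, l, r, s, _, _, rfl⟩ := h; simp [junctionTile] at h1

end
section
variable {n : ℤ} {t : WangTile Lbl}

lemma mem_Text_of_white (h : t ∈ whiteTiles n) : t ∈ Text n :=
  Or.inl (Or.inl (Or.inl (Or.inl (Or.inl (Or.inl (Or.inl (Or.inl (Or.inl h))))))))
lemma mem_Text_of_blue (h : t ∈ blueH n) : t ∈ Text n :=
  Or.inl (Or.inl (Or.inl (Or.inl (Or.inl (Or.inl (Or.inl (Or.inl (Or.inr h))))))))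
lemma mem_Text_of_green (h : t ∈ greenH n) : t ∈ Text n :=
  Or.inl (Or.inl (Or.inl (Or.inl (Or.inl (Or.inl (Or.inl (Or.inr h)))))))
lemma mem_Text_of_yellow (h : t ∈ yellowH n) : t ∈ Text n :=
  Or.inl (Or.inl (Or.inl (Or.inl (Or.inl (Or.inl (Or.inr h))))))
lemma mem_Text_of_junction (h : t ∈ junctions n) : t ∈ Text n := Or.inr h

lemma white_mem_Tmet (hn : 1 ≤ n) (h : t ∈ whiteTiles n) : t ∈ Tmet n := by
  refine ⟨mem_Text_of_white h, ?_⟩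
  obtain ⟨i, j, hi1, hi2, hj1, hj2, rfl⟩ := h
  rintro ((⟨m, hm1, hm2, hEq⟩ | ⟨s, ⟨m, hm1, hm2, rfl⟩, hEq⟩) | hD)
  · simp [WangTile.mk.injEq, Prod.mk.injEq] at hEq
  · simp [hatT, WangTile.mk.injEq, Prod.mk.injEq] at hEq
  · simp only [Dset, hatT, junctionTile, Set.mem_insert_iff, Set.mem_singleton_iff,
      WangTile.mk.injEq, Prod.mk.injEq] at hD
    omega

lemma blue_mem_Tmet (hn : 1 ≤ n) {i : ℤ} (h0 : 0 ≤ i) (h1 : i ≤ n) (hne : i ≠ n) :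
    (⟨(0, 0, i + 1), (1, 1, 1), (0, 0, i), (1, 1, n)⟩ : WangTile Lbl) ∈ Tmet n := by
  refine ⟨mem_Text_of_blue ⟨i, h0, h1, rfl⟩, ?_⟩
  rintro ((⟨m, hm1, hm2, hEq⟩ | ⟨s, ⟨m, hm1, hm2, rfl⟩, hEq⟩) | hD)
  · simp [WangTile.mk.injEq, Prod.mk.injEq] at hEq
  · simp [hatT, WangTile.mk.injEq, Prod.mk.injEq] at hEq
  · simp only [Dset, hatT, junctionTile, Set.mem_insert_iff, Set.mem_singleton_iff,
      WangTile.mk.injEq, Prod.mk.injEq] at hD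
    omega

lemma green_mem_Tmet (hn : 1 ≤ n) {i : ℤ} (h0 : 0 ≤ i) (h1 : i ≤ n) :
    (⟨(0, 1, i + 1), (1, 1, 1), (0, 0, i), (1, 1, n + 1)⟩ : WangTile Lbl) ∈ Tmet n := by
  refine ⟨mem_Text_of_green ⟨i, h0, h1, rfl⟩, ?_⟩
  rintro ((⟨m, hm1, hm2, hEq⟩ | ⟨s, ⟨m, hm1, hm2, rfl⟩, hEq⟩) | hD)
  · simp [WangTile.mk.injEq, Prod.mk.injEq] at hEq
  · simp [hatT, WangTile.mk.injEq, Prod.mk.injEq] at hEq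
  · simp only [Dset, hatT, junctionTile, Set.mem_insert_iff, Set.mem_singleton_iff,
      WangTile.mk.injEq, Prod.mk.injEq] at hD
    omega

lemma yellow_mem_Tmet (hn : 1 ≤ n) {i : ℤ} (h0 : 1 ≤ i) (h1 : i ≤ n) :
    (⟨(0, 1, i + 1), (1, 1, 2), (0, 1, i), (1, 1, n + 1)⟩ : WangTile Lbl) ∈ Tmet n := by
  refine ⟨mem_Text_of_yellow ⟨i, h0, h1, rfl⟩, ?_⟩
  rintro ((⟨m, hm1, hm2, hEq⟩ | ⟨s, ⟨m, hm1, hm2, rfl⟩, hEq⟩) | hD)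
  · simp [WangTile.mk.injEq, Prod.mk.injEq] at hEq
  · simp [hatT, WangTile.mk.injEq, Prod.mk.injEq] at hEq
  · simp only [Dset, hatT, junctionTile, Set.mem_insert_iff, Set.mem_singleton_iff,
      WangTile.mk.injEq, Prod.mk.injEq] at hD
    omega

lemma junction_mem_Tmet (hn : 1 ≤ n) {k l r s : ℤ}
    (hkl : (k, l) ∈ jPairs) (hrs : (r, s) ∈ jPairs)
    (h1 : ¬(k = 0 ∧ l = 0 ∧ r = 1 ∧ s = 1)) (h2 : ¬(k = 1 ∧ l = 1 ∧ r = 0 ∧ s = 0)) :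
    junctionTile n k l r s ∈ Tmet n := by
  refine ⟨mem_Text_of_junction ⟨k, l, r, s, hkl, hrs, rfl⟩, ?_⟩
  simp only [jPairs, Set.mem_insert_iff, Set.mem_singleton_iff, Prod.mk.injEq] at hkl hrs
  rintro ((⟨m, hm1, hm2, hEq⟩ | ⟨s', ⟨m, hm1, hm2, rfl⟩, hEq⟩) | hD)
  · simp [junctionTile, WangTile.mk.injEq, Prod.mk.injEq] at hEq
  · simp [hatT, junctionTile, WangTile.mk.injEq, Prod.mk.injEq] at hEq
  · simp only [Dset, hatT, junctionTile, Set.mem_insert_iff, Set.mem_singleton_iff,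
      WangTile.mk.injEq, Prod.mk.injEq] at hD
    omega

end
section
variable {n : ℤ} {t : WangTile Lbl}

lemma hatT_hatT (t : WangTile Lbl) : hatT (hatT t) = t := rfl

lemma hatT_mem_Text (h : t ∈ Text n) : hatT t ∈ Text n := by
  rcases h with (((((((((h | h) | h) | h) | h) | h) | h) | h) | h) | h)
  · obtain ⟨i, j, h1, h2, h3, h4, rfl⟩ := h
    exact mem_Text_of_white ⟨j, i, h3, h4, h1, h2, rfl⟩
  · exact Or.inl (Or.inl (Or.inl (Or.inl (Or.inr ⟨t, h, rfl⟩))))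
  · exact Or.inl (Or.inl (Or.inl (Or.inr ⟨t, h, rfl⟩)))
  · exact Or.inl (Or.inl (Or.inr ⟨t, h, rfl⟩))
  · exact Or.inl (Or.inr ⟨t, h, rfl⟩)
  all_goals try {
    obtain ⟨s, hs, rfl⟩ := h
    rw [hatT_hatT]
    first
      | exact mem_Text_of_blue hs
      | exact mem_Text_of_green hs
      | exact mem_Text_of_yellow hs
      | exact Or.inl (Or.inl (Or.inl (Or.inl (Or.inl (Or.inr hs)))))
  }
  · obtain ⟨k, l, r, s, hkl, hrs, rfl⟩ := h
    exact mem_Text_of_junction ⟨r, s, k, l, hrs, hkl, rfl⟩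

lemma hatT_mem_Tmet (h : t ∈ Tmet n) : hatT t ∈ Tmet n := by
  obtain ⟨hT, hE⟩ := h
  refine ⟨hatT_mem_Text hT, ?_⟩
  rintro ((ha | ⟨s, hs, hseq⟩) | hD)
  · exact hE (Or.inl (Or.inr ⟨hatT t, ha, rfl⟩))
  · have : s = t := by rw [← hatT_hatT s, hseq, hatT_hatT]
    exact hE (Or.inl (Or.inl (this ▸ hs)))
  · apply hE
    refine Or.inr ?_
    simp only [Dset, Set.mem_insert_iff, Set.mem_singleton_iff] at hD ⊢
    rcases hD with h | h | h | h <;>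
      rw [← hatT_hatT t, h] <;> simp [hatT, junctionTile]

end
section
variable {n : ℤ} {t : WangTile Lbl}

lemma facts_of_Tmet (hn : 1 ≤ n) (h : t ∈ Tmet n) :
    t.left ∈ Vn n ∧ t.bottom ∈ Vn n ∧
      t.left ≠ ((0:ℤ), (0:ℤ), n + 1) ∧ t.bottom ≠ ((0:ℤ), (0:ℤ), n + 1) ∧
      ¬(t.bottom.2.1 = t.bottom.1 + 1 ∧ t.left.1 = t.left.2.1 ∧ t.left.1 = t.left.2.2) ∧
      ¬(t.left.2.1 = t.left.1 + 1 ∧ t.bottom.1 = t.bottom.2.1 ∧ t.bottom.1 = t.bottom.2.2) := by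
  obtain ⟨hT, hE⟩ := h
  rcases hT with (((((((((h | h) | h) | h) | h) | h) | h) | h) | h) | h)
  · obtain ⟨i, j, h1, h2, h3, h4, rfl⟩ := h
    refine ⟨?_, ?_, ?_, ?_, ?_, ?_⟩ <;>
      all_goals first
        | (simp [Vn, hatT, junctionTile, Prod.ext_iff]; omega)
        | simp [Vn, hatT, junctionTile, Prod.ext_iff]
        | omega
  · obtain ⟨i, h1, h2, rfl⟩ := h
    refine ⟨?_, ?_, ?_, ?_, ?_, ?_⟩ <;>
      all_goals first
        | (simp [Vn, hatT, junctionTile, Prod.ext_iff]; omega)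
        | simp [Vn, hatT, junctionTile, Prod.ext_iff]
        | omega
  · obtain ⟨i, h1, h2, rfl⟩ := h
    refine ⟨?_, ?_, ?_, ?_, ?_, ?_⟩ <;>
      all_goals first
        | (simp [Vn, hatT, junctionTile, Prod.ext_iff]; omega)
        | simp [Vn, hatT, junctionTile, Prod.ext_iff]
        | omega
  · obtain ⟨i, h1, h2, rfl⟩ := h
    refine ⟨?_, ?_, ?_, ?_, ?_, ?_⟩ <;>
      all_goals first
        | (simp [Vn, hatT, junctionTile, Prod.ext_iff]; omega)
        | simp [Vn, hatT, junctionTile, Prod.ext_iff]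
        | omega
  · exact absurd (Or.inl (Or.inl h)) hE
  · obtain ⟨s, ⟨i, h1, h2, rfl⟩, rfl⟩ := h
    refine ⟨?_, ?_, ?_, ?_, ?_, ?_⟩ <;>
      all_goals first
        | (simp [Vn, hatT, junctionTile, Prod.ext_iff]; omega)
        | simp [Vn, hatT, junctionTile, Prod.ext_iff]
        | omega
  · obtain ⟨s, ⟨i, h1, h2, rfl⟩, rfl⟩ := h
    refine ⟨?_, ?_, ?_, ?_, ?_, ?_⟩ <;>
      all_goals first
        | (simp [Vn, hatT, junctionTile, Prod.ext_iff]; omega)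
        | simp [Vn, hatT, junctionTile, Prod.ext_iff]
        | omega
  · obtain ⟨s, ⟨i, h1, h2, rfl⟩, rfl⟩ := h
    refine ⟨?_, ?_, ?_, ?_, ?_, ?_⟩ <;>
      all_goals first
        | (simp [Vn, hatT, junctionTile, Prod.ext_iff]; omega)
        | simp [Vn, hatT, junctionTile, Prod.ext_iff]
        | omega
  · exact absurd (Or.inl (Or.inr h)) hE
  · obtain ⟨k, l, r, s, hkl, hrs, rfl⟩ := h
    simp only [jPairs, Set.mem_insert_iff, Set.mem_singleton_iff, Prod.mk.injEq] at hkl hrs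
    refine ⟨?_, ?_, ?_, ?_, ?_, ?_⟩ <;>
      all_goals first
        | (simp [Vn, hatT, junctionTile, Prod.ext_iff]; omega)
        | simp [Vn, hatT, junctionTile, Prod.ext_iff]
        | omega

end
section
variable {n : ℤ} {t : WangTile Lbl}

lemma row_classify (hn : 1 ≤ n) (hT : t ∈ Text n) (hl0 : t.left.1 = 0)
    (hbn : t.bottom = ((1:ℤ), (1:ℤ), n) ∨ t.bottom = ((1:ℤ), (1:ℤ), n + 1))
    (hanti : t.bottom = ((1:ℤ), (1:ℤ), n) → t.left.2.1 = 0) :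
    t.top.1 = 1 ∧ t.right.1 = 0 ∧ t.right.2.2 = t.left.2.2 + 1 ∧
      (t.bottom = ((1:ℤ), (1:ℤ), n) → t.right.2.1 = 0) ∧
      (t.bottom = ((1:ℤ), (1:ℤ), n + 1) → t.right.2.1 = 1) ∧
      ((t.left ≠ ((0:ℤ), (0:ℤ), n) ∨ t.bottom ≠ ((1:ℤ), (1:ℤ), n)) → t ∈ Tmet n) := by
  have hb1 : t.bottom.1 = 1 := by rcases hbn with h | h <;> rw [h]
  rcases classify_horiz hT hl0 hb1 with h | h | h | h
  · obtain ⟨i, h1, h2, rfl⟩ := h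
    refine ⟨rfl, rfl, rfl, fun _ => rfl, ?_, ?_⟩
    · intro hc; exfalso; simp [Prod.ext_iff] at hc
    · rintro (hne | hne)
      · refine blue_mem_Tmet hn h1 h2 ?_
        intro hc; exact hne (by rw [hc])
      · exact absurd rfl hne
  · obtain ⟨i, h1, h2, rfl⟩ := h
    refine ⟨rfl, rfl, rfl, ?_, fun _ => rfl, fun _ => green_mem_Tmet hn h1 h2⟩
    intro hc; exfalso; simp [Prod.ext_iff] at hc
  · obtain ⟨i, h1, h2, rfl⟩ := h
    refine ⟨rfl, rfl, rfl, ?_, fun _ => rfl, fun _ => yellow_mem_Tmet hn h1 h2⟩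
    intro hc; exfalso; simp [Prod.ext_iff] at hc
  · obtain ⟨i, h1, h2, rfl⟩ := h
    exfalso
    have := hanti rfl
    simp at this
end
lemma rowLemma (n : ℤ) (hn : 1 ≤ n) (u v : Lbl) (hu : u ∈ Vn n) (hv : v ∈ Vn n)
    (hvne : v ≠ ((0:ℤ), (0:ℤ), n + 1))
    (hJ1 : ¬(v.2.1 = v.1 + 1 ∧ u.1 = u.2.1 ∧ u.1 = u.2.2))
    (hJ2 : ¬(u.2.1 = u.1 + 1 ∧ v.1 = v.2.1 ∧ v.1 = v.2.2))
    (w h : ℕ) (p : ℕ → ℕ → WangTile Lbl) (hh : 1 ≤ h)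
    (hval : ValidPattern (Text n) w h p)
    (hl : leftWord h p = tau n u) (hb : bottomWord w p = tau n v) :
    p 0 0 ∈ Tmet n ∧ ∀ i, 1 ≤ i → i < w → p i 0 ∈ Tmet n ∧ (p i 0).top.1 = 1 := by
  obtain ⟨hmem, hhor, hver⟩ := hval
  obtain ⟨hv1, hv2, hv3, hv4, hv5⟩ := hv
  have hvne' : ¬(v.1 = 0 ∧ v.2.1 = 0 ∧ v.2.2 = n + 1) := by
    intro ⟨a, b, c⟩; exact hvne (by simp [Prod.ext_iff, a, b, c])
  have hwL : w = (tau n v).length := by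
    have := congrArg List.length hb; simpa [bottomWord] using this
  have hhM : h = (tau n u).length := by
    have := congrArg List.length hl; simpa [leftWord] using this
  have hw0 : 0 < w := by
    rw [hwL]; exact List.length_pos_iff.mpr (tau_ne_nil n v)
  have hBotE : ∀ i (hi : i < w), (p i 0).bottom = (tau n v)[i]'(by omega) := by
    intro i hi
    have h2 : (bottomWord w p)[i]? = some ((p i 0).bottom) := by simp [bottomWord, hi]
    rw [hb, List.getElem?_eq_getElem (by omega)] at h2
    exact (Option.some.inj h2).symm
  have hLeftE : (p 0 0).left = (tau n u)[0]'(by omega) := by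
    have h2 : (leftWord h p)[0]? = some ((p 0 0).left) := by simp [leftWord, show 0 < h from hh]
    rw [hl, List.getElem?_eq_getElem (by omega)] at h2
    exact (Option.some.inj h2).symm
  have hbot0 : (p 0 0).bottom
      = ((0:ℤ), v.1 - v.2.1 + 1, if v.1 = v.2.2 then n + 1 else n) := by
    rw [hBotE 0 hw0, tau_getElem_zero]
  have hleft0 : (p 0 0).left
      = ((0:ℤ), u.1 - u.2.1 + 1, if u.1 = u.2.2 then n + 1 else n) := by
    rw [hLeftE, tau_getElem_zero]
  have hj : p 0 0 ∈ junctions n :=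
    classify_junction (hmem 0 0 hw0 hh) (by simp [hleft0]) (by simp [hbot0])
  obtain ⟨k, l, r, s, hkl, hrs, hpj⟩ := hj
  have hbl : l = v.1 - v.2.1 + 1 ∧ k + n = (if v.1 = v.2.2 then n + 1 else n) := by
    have h2 := hbot0; rw [hpj] at h2
    simpa [junctionTile, Prod.ext_iff, eq_comm] using h2
  have hls : s = u.1 - u.2.1 + 1 ∧ r + n = (if u.1 = u.2.2 then n + 1 else n) := by
    have h2 := hleft0; rw [hpj] at h2
    simpa [junctionTile, Prod.ext_iff, eq_comm] using h2
  obtain ⟨hbl1, hbl2⟩ := hbl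
  obtain ⟨hls1, hls2⟩ := hls
  have hjT : p 0 0 ∈ Tmet n := by
    rw [hpj]; apply junction_mem_Tmet hn hkl hrs
    · rintro ⟨rfl, rfl, rfl, rfl⟩
      refine hJ1 ⟨by omega, by omega, ?_⟩
      by_cases hc : u.1 = u.2.2
      · exact hc
      · rw [if_neg hc] at hls2; omega
    · rintro ⟨rfl, rfl, rfl, rfl⟩
      refine hJ2 ⟨by omega, by omega, ?_⟩
      by_cases hc : v.1 = v.2.2
      · exact hc
      · rw [if_neg hc] at hbl2; omega
  have hr00 : (p 0 0).right = ((0:ℤ), k, l) := by rw [hpj]; rfl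
  have RI : ∀ i : ℕ, i < w → 1 ≤ i →
      (p i 0).left.1 = 0 ∧ (p i 0).left.2.2 = v.1 - v.2.1 + i ∧
        ((i : ℤ) ≤ v.2.2 - v.1 - 1 → (p i 0).left.2.1 = 0) := by
    intro i
    induction i with
    | zero => intro _ h1; exact absurd h1 (by omega)
    | succ i ih =>
      intro hiw _
      by_cases hi1 : 1 ≤ i
      · have hiw' : i < w := by omega
        obtain ⟨ih1, ih2, ih3⟩ := ih hiw' hi1
        have hbi := hBotE i hiw'
        rw [tau_getElem_pos ⟨hv1, hv2, hv3, hv4, hv5⟩ hn i hi1 (by omega)] at hbi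
        rw [← hhor i 0 (by omega) hh]
        by_cases hc : (i : ℤ) ≤ v.2.2 - v.1 - 1
        · rw [if_pos hc] at hbi
          obtain ⟨_, hR1, hR3, hR0, _, _⟩ :=
            row_classify hn (hmem i 0 hiw' hh) ih1 (Or.inl hbi) (fun _ => ih3 hc)
          exact ⟨hR1, by rw [hR3, ih2]; push_cast; ring, fun _ => hR0 hbi⟩
        · rw [if_neg hc] at hbi
          obtain ⟨_, hR1, hR3, _, _, _⟩ :=
            row_classify hn (hmem i 0 hiw' hh) ih1 (Or.inr hbi)
              (fun hbn => by rw [hbi] at hbn; exfalso; simp [Prod.ext_iff] at hbn)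
          refine ⟨hR1, by rw [hR3, ih2]; push_cast; ring, ?_⟩
          intro hc2; exfalso; push_cast at hc2; omega
      · have hi0 : i = 0 := by omega
        subst hi0
        rw [← hhor 0 0 (by omega) hh, hr00]
        refine ⟨rfl, by push_cast; simpa using by omega, ?_⟩
        intro hc
        by_cases hxz : v.1 = v.2.2
        · exfalso; push_cast at hc; omega
        · rw [if_neg hxz] at hbl2; simpa using by omega
  refine ⟨hjT, ?_⟩
  intro i hi1 hiw
  obtain ⟨ih1, ih2, ih3⟩ := RI i hiw hi1
  have hbi := hBotE i hiw
  rw [tau_getElem_pos ⟨hv1, hv2, hv3, hv4, hv5⟩ hn i hi1 (by omega)] at hbi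
  by_cases hc : (i : ℤ) ≤ v.2.2 - v.1 - 1
  · rw [if_pos hc] at hbi
    obtain ⟨hT1, _, _, _, _, hTm⟩ :=
      row_classify hn (hmem i 0 hiw hh) ih1 (Or.inl hbi) (fun _ => ih3 hc)
    refine ⟨hTm (Or.inl ?_), hT1⟩
    intro hEq
    have hEq2 : (p i 0).left.2.2 = n := by rw [hEq]
    rw [ih2] at hEq2
    omega
  · rw [if_neg hc] at hbi
    obtain ⟨hT1, _, _, _, _, hTm⟩ :=
      row_classify hn (hmem i 0 hiw hh) ih1 (Or.inr hbi)
        (fun hbn => by rw [hbi] at hbn; exfalso; simp [Prod.ext_iff] at hbn)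
    refine ⟨hTm (Or.inr ?_), hT1⟩
    intro hEq
    rw [hbi] at hEq
    simp [Prod.ext_iff] at hEq
/-- for a tile of `T_n`, the unique valid rectangular pattern over `T'_n`
with boundary words given by `τ_n` uses only tiles of `T_n`. -/
theorem stmt5 (n : ℤ) (hn : 1 ≤ n) (α β u v : Lbl)
    (ht : (⟨α, β, u, v⟩ : WangTile Lbl) ∈ Tmet n)
    (w h : ℕ) (p : ℕ → ℕ → WangTile Lbl)
    (hw : 1 ≤ w) (hh : 1 ≤ h)
    (hval : ValidPattern (Text n) w h p)
    (hr : rightWord w h p = tau n α) (htp : topWord w h p = tau n β)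
    (hl : leftWord h p = tau n u) (hb : bottomWord w p = tau n v) :
    ∀ i j, i < w → j < h → p i j ∈ Tmet n := by
  obtain ⟨fu, fv, fune, fvne, fJ1, fJ2⟩ := facts_of_Tmet hn ht
  obtain ⟨hmem, hhor, hver⟩ := hval
  have hrow := rowLemma n hn u v fu fv fvne fJ1 fJ2 w h p hh ⟨hmem, hhor, hver⟩ hl hb
  -- transposed pattern
  set q : ℕ → ℕ → WangTile Lbl := fun a b => hatT (p b a) with hq
  have hqval : ValidPattern (Text n) h w q :=
    ⟨fun a b ha hb' => hatT_mem_Text (hmem b a hb' ha),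
     fun a b ha hb' => hver b a hb' ha,
     fun a b ha hb' => hhor b a hb' ha⟩
  have hqb : bottomWord h q = leftWord h p := rfl
  have hql : leftWord w q = bottomWord w p := rfl
  have hcol := rowLemma n hn v u fv fu fune fJ2 fJ1 h w q hw hqval
    (hql.trans hb) (hqb.trans hl)
  intro i j hiw hjh
  -- column facts
  have hcolF : ∀ j, 1 ≤ j → j < h → p 0 j ∈ Tmet n ∧ (p 0 j).right.1 = 1 := by
    intro j hj1 hjh
    obtain ⟨hm, htop⟩ := hcol.2 j hj1 hjh
    exact ⟨hatT_mem_Tmet hm, htop⟩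
  have hrowF : ∀ i, 1 ≤ i → i < w → p i 0 ∈ Tmet n ∧ (p i 0).top.1 = 1 := hrow.2
  have hwht : ∀ j, 1 ≤ j → j < h → ∀ i, 1 ≤ i → i < w → p i j ∈ whiteTiles n := by
    intro j
    induction j with
    | zero => intro h1; exact absurd h1 (by omega)
    | succ j ihj =>
      intro _ hjh i
      induction i with
      | zero => intro h1; exact absurd h1 (by omega)
      | succ i ihi =>
        intro _ hiw
        have hleft : (p (i + 1) (j + 1)).left.1 = 1 := by
          rw [← hhor i (j + 1) hiw hjh]
          by_cases hi1 : 1 ≤ i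
          · obtain ⟨a, b, _, _, _, _, hEq⟩ := ihi hi1 (by omega)
            rw [hEq]
          · have hi0 : i = 0 := by omega
            rw [hi0]
            exact (hcolF (j + 1) (by omega) hjh).2
        have hbot : (p (i + 1) (j + 1)).bottom.1 = 1 := by
          rw [← hver (i + 1) j hiw hjh]
          by_cases hj1 : 1 ≤ j
          · obtain ⟨a, b, _, _, _, _, hEq⟩ := ihj hj1 (by omega) (i + 1) (by omega) hiw
            rw [hEq]
          · have hj0 : j = 0 := by omega
            rw [hj0]
            exact (hrowF (i + 1) (by omega) hiw).2
        exact classify_white (hmem (i + 1) (j + 1) hiw hjh) hleft hbot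
  by_cases hi1 : 1 ≤ i
  · by_cases hj1 : 1 ≤ j
    · exact white_mem_Tmet hn (hwht j hj1 hjh i hi1 hiw)
    · have : j = 0 := by omega
      subst this
      exact (hrowF i hi1 hiw).1
  · have : i = 0 := by omega
    subst this
    by_cases hj1 : 1 ≤ j
    · exact (hcolF j hj1 hjh).1
    · have : j = 0 := by omega
      subst this
      exact hrow.1
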